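/- Let (c, ρ, θ, u) be a classical solution of the mesoscopic two-phase Navier–Stokes system on [0,T], spatially 1-periodic, with σ := μ(c)∂ₓu − (γ(c)−1)ρθ continuously differentiable, and let β : ℝ → ℝ be continuously differentiable. Then the renormalized equation holds pointwise: ∂ₜ(β(σ)/μ(c)) + ∂ₓ(u·β(σ)/μ(c)) − ∂ₓ(∂ₓσ/ρ)·β'(σ) = −(∂ₓu/μ(c))·(σβ'(σ) − β(σ)) − ((γ(c)−1)/(c_v(c)μ(c)))·σ·∂ₓu·β'(σ). -/

import Mathlib

open Set Function MeasureTheory intervalIntegral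

/-- Partial derivative in time of a function of `(t, x)`. -/
noncomputable def pdt (f : ℝ → ℝ → ℝ) (t x : ℝ) : ℝ := deriv (fun s => f s x) t

/-- Partial derivative in space of a function of `(t, x)`. -/
noncomputable def pdx (f : ℝ → ℝ → ℝ) (t x : ℝ) : ℝ := deriv (fun y => f t y) x

/-- Affine interpolation of a coefficient between the two phases:
`aff a b c = c·a + (1−c)·b` (so `μ(c) = aff μ₊ μ₋ c`, etc.). -/
def affc (a b s : ℝ) : ℝ := s * a + (1 - s) * b

/-- Cauchy stress `σ = μ(c)∂ₓu − (γ(c)−1)ρθ` of the mesoscopic two-phase model. -/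
noncomputable def sigm (μp μm γp γm : ℝ) (c ρ θ u : ℝ → ℝ → ℝ) (t x : ℝ) : ℝ :=
  affc μp μm (c t x) * pdx u t x - (affc γp γm (c t x) - 1) * ρ t x * θ t x

/-- Specific total energy `E = u²/2 + c_v(c)θ`. -/
noncomputable def Etot (kp km : ℝ) (c θ u : ℝ → ℝ → ℝ) (t x : ℝ) : ℝ :=
  u t x ^ 2 / 2 + affc kp km (c t x) * θ t x

/-- Admissible constants: `μ_± > 0`, `γ_± > 1`, `c_{v,±} > 0`. -/
def GoodConsts (μp μm γp γm kp km : ℝ) : Prop :=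
  0 < μp ∧ 0 < μm ∧ 1 < γp ∧ 1 < γm ∧ 0 < kp ∧ 0 < km

/-- The mesoscopic two-phase Navier–Stokes system on the one-dimensional torus:
spatial 1-periodicity together with the transport, mass, momentum and total
energy equations, satisfied pointwise on `[0,T] × ℝ`. -/
def MesoEqns (μp μm γp γm kp km T : ℝ) (c ρ θ u : ℝ → ℝ → ℝ) : Prop :=
  (∀ t x : ℝ, c t (x + 1) = c t x) ∧ (∀ t x : ℝ, ρ t (x + 1) = ρ t x) ∧
  (∀ t x : ℝ, θ t (x + 1) = θ t x) ∧ (∀ t x : ℝ, u t (x + 1) = u t x) ∧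
  (∀ t ∈ Icc (0:ℝ) T, ∀ x : ℝ, pdt c t x + u t x * pdx c t x = 0) ∧
  (∀ t ∈ Icc (0:ℝ) T, ∀ x : ℝ,
    pdt ρ t x + pdx (fun s y => ρ s y * u s y) t x = 0) ∧
  (∀ t ∈ Icc (0:ℝ) T, ∀ x : ℝ,
    pdt (fun s y => ρ s y * u s y) t x + pdx (fun s y => ρ s y * u s y ^ 2) t x
      = pdx (sigm μp μm γp γm c ρ θ u) t x) ∧
  (∀ t ∈ Icc (0:ℝ) T, ∀ x : ℝ,
    pdt (fun s y => ρ s y * Etot kp km c θ u s y) t x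
      + pdx (fun s y => ρ s y * Etot kp km c θ u s y * u s y) t x
      = pdx (fun s y => sigm μp μm γp γm c ρ θ u s y * u s y) t x)

/-!
Along particle paths `μ(c)` is constant, because `c` is transported, so the chain rule reduces
the renormalized equation to the evolution equation of the stress,
`D_tσ = μ(c)∂ₓ(∂ₓσ/ρ) − ((γ(c)−1)/c_v(c) + 1)σ∂ₓu`, with `D_t = ∂ₜ + u∂ₓ`.
That equation follows from the nonconservative forms of the balance laws: the momentum equation
says `∂ₓσ/ρ = D_tu`, and the energy equation minus the kinetic energy balance says
`ρc_v(c)D_tθ = σ∂ₓu`. Differentiating `D_tu` in `x` needs `∂ₓ∂ₜu = ∂ₜ∂ₓu`. This holds because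
`∂ₓu = (σ + (γ(c)−1)ρθ)/μ(c)` is `C¹`: differentiate `u(s,y) − u(s,x) = ∫ₓʸ ∂ₓu(s,z) dz`
in `s` under the integral sign.
-/

open Metric Filter Topology

section PartialDerivatives

variable {f g : ℝ → ℝ → ℝ} {U : Set (ℝ × ℝ)} {t x : ℝ}

lemma hasDerivAt_pdt (hf : DifferentiableAt ℝ (uncurry f) (t, x)) :
    HasDerivAt (fun s => f s x) (pdt f t x) t := by
  have h := hf.comp t ((hasDerivAt_id t).prodMk (hasDerivAt_const t x)).differentiableAt
  exact h.hasDerivAt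

lemma hasDerivAt_pdx (hf : DifferentiableAt ℝ (uncurry f) (t, x)) :
    HasDerivAt (fun y => f t y) (pdx f t x) x := by
  have h := hf.comp x ((hasDerivAt_const x t).prodMk (hasDerivAt_id x)).differentiableAt
  exact h.hasDerivAt

lemma pdt_eq_fderiv (hf : DifferentiableAt ℝ (uncurry f) (t, x)) :
    pdt f t x = fderiv ℝ (uncurry f) (t, x) (1, 0) := by
  have h := hf.hasFDerivAt.comp_hasDerivAt t ((hasDerivAt_id t).prodMk (hasDerivAt_const t x))
  exact h.deriv

lemma ContDiffOn.continuousOn_pdt (hf : ContDiffOn ℝ 1 (uncurry f) U) (hU : IsOpen U) :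
    ContinuousOn (uncurry (pdt f)) U := by
  refine ((hf.continuousOn_fderiv_of_isOpen hU le_rfl).clm_apply
    (continuousOn_const (c := ((1 : ℝ), (0 : ℝ))))).congr fun p hp => ?_
  exact pdt_eq_fderiv ((hf.differentiableOn one_ne_zero p hp).differentiableAt (hU.mem_nhds hp))

lemma ContinuousOn.slice {S : Set ℝ} (hf : ContinuousOn (uncurry f) U)
    (hS : ∀ y ∈ S, (t, y) ∈ U) : ContinuousOn (f t) S :=
  hf.comp (Continuous.prodMk_right t).continuousOn hS

lemma hasDerivAt_pdt_of_eqOn (hU : IsOpen U) (hf : DifferentiableOn ℝ (uncurry f) U)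
    (hgf : EqOn (uncurry g) (uncurry f) U) (hp : (t, x) ∈ U) :
    HasDerivAt (fun s => g s x) (pdt f t x) t := by
  have hnear : ∀ᶠ s in 𝓝 t, (s, x) ∈ U :=
    (continuous_id.prodMk continuous_const).continuousAt.preimage_mem_nhds (hU.mem_nhds hp)
  exact (hasDerivAt_pdt ((hf _ hp).differentiableAt (hU.mem_nhds hp))).congr_of_eventuallyEq
    (hnear.mono fun s hs => hgf hs)

lemma hasDerivAt_pdx_of_eqOn (hU : IsOpen U) (hf : DifferentiableOn ℝ (uncurry f) U)
    (hgf : EqOn (uncurry g) (uncurry f) U) (hp : (t, x) ∈ U) :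
    HasDerivAt (fun y => g t y) (pdx f t x) x := by
  have hnear : ∀ᶠ y in 𝓝 x, (t, y) ∈ U :=
    (continuous_const.prodMk continuous_id).continuousAt.preimage_mem_nhds (hU.mem_nhds hp)
  exact (hasDerivAt_pdx ((hf _ hp).differentiableAt (hU.mem_nhds hp))).congr_of_eventuallyEq
    (hnear.mono fun y hy => hgf hy)

end PartialDerivatives

section MixedPartials

variable {u V : ℝ → ℝ → ℝ} {U : Set (ℝ × ℝ)} {t x δ : ℝ}

lemma pdt_eq_add_integral (hU : IsOpen U) (hu : DifferentiableOn ℝ (uncurry u) U)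
    (hV : ContDiffOn ℝ 1 (uncurry V) U) (huV : EqOn (uncurry (pdx u)) (uncurry V) U)
    (hK : closedBall t δ ×ˢ closedBall x δ ⊆ U) {y : ℝ} (hy : y ∈ ball x δ) :
    pdt u t y = pdt u t x + ∫ z in x..y, pdt V t z := by
  have hδ : 0 < δ := pos_of_mem_ball hy
  have hdu : ∀ p ∈ U, DifferentiableAt ℝ (uncurry u) p := fun p hp =>
    (hu p hp).differentiableAt (hU.mem_nhds hp)
  have hdV : ∀ p ∈ U, DifferentiableAt ℝ (uncurry V) p := fun p hp =>
    (hV.differentiableOn one_ne_zero p hp).differentiableAt (hU.mem_nhds hp)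
  have hseg : uIcc x y ⊆ closedBall x δ :=
    (convex_closedBall x δ).ordConnected.uIcc_subset (mem_closedBall_self hδ.le)
      (ball_subset_closedBall hy)
  have hmem : ∀ s ∈ closedBall t δ, ∀ z ∈ uIcc x y, (s, z) ∈ U :=
    fun s hs z hz => hK ⟨hs, hseg hz⟩
  have ht : t ∈ closedBall t δ := mem_closedBall_self hδ.le
  have hVs : ∀ s ∈ closedBall t δ, ContinuousOn (V s) (uIcc x y) :=
    fun s hs => hV.continuousOn.slice (hmem s hs)
  have hVt : ContinuousOn (pdt V t) (uIcc x y) := (hV.continuousOn_pdt hU).slice (hmem t ht)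
  obtain ⟨C, hC⟩ := ((isCompact_closedBall t δ).prod (isCompact_closedBall x δ))
    |>.exists_bound_of_continuousOn ((hV.continuousOn_pdt hU).mono hK)
  have hftc : ∀ s ∈ ball t δ, u s y = u s x + ∫ z in x..y, V s z := by
    intro s hs
    have hs' := ball_subset_closedBall hs
    rw [intervalIntegral.integral_eq_sub_of_hasDerivAt (f' := V s)
      (fun z hz => (hasDerivAt_pdx (hdu _ (hmem s hs' z hz))).congr_deriv
        (huV (hmem s hs' z hz)))
      (hVs s hs').intervalIntegrable]
    ring
  have hint : HasDerivAt (fun s => ∫ z in x..y, V s z) (∫ z in x..y, pdt V t z) t :=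
    (intervalIntegral.hasDerivAt_integral_of_dominated_loc_of_deriv_le (ball_mem_nhds t hδ)
      (eventually_of_mem (ball_mem_nhds t hδ) fun s hs =>
        ((hVs s (ball_subset_closedBall hs)).mono uIoc_subset_uIcc).aestronglyMeasurable
          measurableSet_uIoc)
      (hVs t ht).intervalIntegrable
      ((hVt.mono uIoc_subset_uIcc).aestronglyMeasurable measurableSet_uIoc)
      (Eventually.of_forall fun z hz s hs =>
        hC (s, z) ⟨ball_subset_closedBall hs, hseg (uIoc_subset_uIcc hz)⟩)
      intervalIntegrable_const
      (Eventually.of_forall fun z hz s hs => hasDerivAt_pdt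
        (hdV _ (hmem s (ball_subset_closedBall hs) z (uIoc_subset_uIcc hz))))).2
  have hux := hasDerivAt_pdt (hdu _ (hmem t ht x left_mem_uIcc))
  exact ((hux.add hint).congr_of_eventuallyEq
    (eventually_of_mem (ball_mem_nhds t hδ) hftc)).deriv

/-- Peano's version of Schwarz's theorem on mixed partial derivatives. -/
theorem hasDerivAt_pdt_of_pdx_eqOn (hU : IsOpen U) (hu : DifferentiableOn ℝ (uncurry u) U)
    (hV : ContDiffOn ℝ 1 (uncurry V) U) (huV : EqOn (uncurry (pdx u)) (uncurry V) U)
    (hp : (t, x) ∈ U) : HasDerivAt (pdt u t) (pdt V t x) x := by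
  obtain ⟨δ, hδ, hK⟩ := nhds_basis_closedBall.mem_iff.mp (hU.mem_nhds hp)
  rw [← closedBall_prod_same] at hK
  have hcont : ContinuousOn (pdt V t) (ball x δ) :=
    (hV.continuousOn_pdt hU).slice fun z hz =>
      hK ⟨mem_closedBall_self hδ.le, ball_subset_closedBall hz⟩
  have hint : HasDerivAt (fun y => pdt u t x + ∫ z in x..y, pdt V t z) (pdt V t x) x :=
    (intervalIntegral.integral_hasDerivAt_right IntervalIntegrable.refl
      (hcont.stronglyMeasurableAtFilter isOpen_ball x (mem_ball_self hδ))
      (hcont.continuousAt (ball_mem_nhds x hδ))).const_add _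
  exact hint.congr_of_eventuallyEq (eventually_of_mem (ball_mem_nhds x hδ) fun y hy =>
    pdt_eq_add_integral hU hu hV huV hK hy)

end MixedPartials

section TwoPhaseModel

variable {μp μm γp γm kp km T : ℝ} {c ρ θ u : ℝ → ℝ → ℝ} {t x : ℝ}

lemma affc_pos {a b s : ℝ} (ha : 0 < a) (hb : 0 < b) (hs : s ∈ Icc (0 : ℝ) 1) :
    0 < affc a b s := by
  obtain ⟨h0, h1⟩ := hs
  unfold affc
  rcases h0.eq_or_lt with rfl | h0
  · linarith
  · nlinarith

lemma contDiff_affc {n : WithTop ℕ∞} (a b : ℝ) (hc : ContDiff ℝ n (uncurry c)) :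
    ContDiff ℝ n (uncurry fun s y => affc a b (c s y)) := by
  have h : ContDiff ℝ n fun r : ℝ => affc a b r := by unfold affc; fun_prop
  exact h.comp hc

lemma hasDerivAt_affc {f : ℝ → ℝ} {f' r : ℝ} (a b : ℝ) (hf : HasDerivAt f f' r) :
    HasDerivAt (fun s => affc a b (f s)) ((a - b) * f') r :=
  ((hf.mul_const a).add (((hasDerivAt_const r 1).sub hf).mul_const b)).congr_deriv (by ring)

lemma transport_affc (a b : ℝ) (hc : DifferentiableAt ℝ (uncurry c) (t, x))
    (htrans : pdt c t x + u t x * pdx c t x = 0) :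
    pdt (fun s y => affc a b (c s y)) t x + u t x * pdx (fun s y => affc a b (c s y)) t x
      = 0 := by
  have ht : pdt (fun s y => affc a b (c s y)) t x = (a - b) * pdt c t x :=
    (hasDerivAt_affc a b (hasDerivAt_pdt hc)).deriv
  have hx : pdx (fun s y => affc a b (c s y)) t x = (a - b) * pdx c t x :=
    (hasDerivAt_affc a b (hasDerivAt_pdx hc)).deriv
  rw [ht, hx]
  linear_combination (a - b) * htrans

lemma hasDerivAt_stress (μp μm γp γm : ℝ) {f ρ θ v : ℝ → ℝ} {f' ρ' θ' v' r : ℝ}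
    (hf : HasDerivAt f f' r) (hρ : HasDerivAt ρ ρ' r) (hθ : HasDerivAt θ θ' r)
    (hv : HasDerivAt v v' r) :
    HasDerivAt (fun r => affc μp μm (f r) * v r - (affc γp γm (f r) - 1) * ρ r * θ r)
      ((μp - μm) * f' * v r + affc μp μm (f r) * v'
        - ((γp - γm) * f' * ρ r * θ r + (affc γp γm (f r) - 1) * (ρ' * θ r + ρ r * θ'))) r :=
  (((hasDerivAt_affc μp μm hf).fun_mul hv).sub
    ((((hasDerivAt_affc γp γm hf).sub_const 1).fun_mul hρ).fun_mul hθ)).congr_deriv (by ring)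

lemma mass_eq_nonconservative (hρ : DifferentiableAt ℝ (uncurry ρ) (t, x))
    (hu : DifferentiableAt ℝ (uncurry u) (t, x))
    (hmass : pdt ρ t x + pdx (fun s y => ρ s y * u s y) t x = 0) :
    pdt ρ t x + u t x * pdx ρ t x + ρ t x * pdx u t x = 0 := by
  have hflux : pdx (fun s y => ρ s y * u s y) t x = pdx ρ t x * u t x + ρ t x * pdx u t x :=
    ((hasDerivAt_pdx hρ).fun_mul (hasDerivAt_pdx hu)).deriv
  linear_combination hmass - hflux

lemma momentum_eq_nonconservative {F : ℝ} (hρ : DifferentiableAt ℝ (uncurry ρ) (t, x))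
    (hu : DifferentiableAt ℝ (uncurry u) (t, x))
    (hmass : pdt ρ t x + pdx (fun s y => ρ s y * u s y) t x = 0)
    (hmom : pdt (fun s y => ρ s y * u s y) t x + pdx (fun s y => ρ s y * u s y ^ 2) t x = F) :
    ρ t x * (pdt u t x + u t x * pdx u t x) = F := by
  have ht : pdt (fun s y => ρ s y * u s y) t x = pdt ρ t x * u t x + ρ t x * pdt u t x :=
    ((hasDerivAt_pdt hρ).fun_mul (hasDerivAt_pdt hu)).deriv
  have hx : pdx (fun s y => ρ s y * u s y ^ 2) t x
      = pdx ρ t x * u t x ^ 2 + ρ t x * (2 * u t x * pdx u t x) :=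
    ((hasDerivAt_pdx hρ).fun_mul ((hasDerivAt_pdx hu).fun_pow 2)).deriv.trans (by ring)
  linear_combination hmom - ht - hx - u t x * mass_eq_nonconservative hρ hu hmass

lemma temperature_eq_of_energy {S : ℝ → ℝ → ℝ} (hc : DifferentiableAt ℝ (uncurry c) (t, x))
    (hρ : DifferentiableAt ℝ (uncurry ρ) (t, x)) (hθ : DifferentiableAt ℝ (uncurry θ) (t, x))
    (hu : DifferentiableAt ℝ (uncurry u) (t, x)) (hS : DifferentiableAt ℝ (uncurry S) (t, x))
    (htrans : pdt c t x + u t x * pdx c t x = 0)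
    (hmass : pdt ρ t x + pdx (fun s y => ρ s y * u s y) t x = 0)
    (hmom : pdt (fun s y => ρ s y * u s y) t x + pdx (fun s y => ρ s y * u s y ^ 2) t x
      = pdx S t x)
    (heng : pdt (fun s y => ρ s y * Etot kp km c θ u s y) t x
      + pdx (fun s y => ρ s y * Etot kp km c θ u s y * u s y) t x
      = pdx (fun s y => S s y * u s y) t x) :
    ρ t x * affc kp km (c t x) * (pdt θ t x + u t x * pdx θ t x) = S t x * pdx u t x := by
  have hEt : HasDerivAt (fun s => Etot kp km c θ u s x) (u t x * pdt u t x
      + ((kp - km) * pdt c t x * θ t x + affc kp km (c t x) * pdt θ t x)) t :=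
    ((((hasDerivAt_pdt hu).fun_pow 2).div_const 2).add
      ((hasDerivAt_affc kp km (hasDerivAt_pdt hc)).fun_mul (hasDerivAt_pdt hθ))).congr_deriv
      (by ring)
  have hEx : HasDerivAt (fun y => Etot kp km c θ u t y) (u t x * pdx u t x
      + ((kp - km) * pdx c t x * θ t x + affc kp km (c t x) * pdx θ t x)) x :=
    ((((hasDerivAt_pdx hu).fun_pow 2).div_const 2).add
      ((hasDerivAt_affc kp km (hasDerivAt_pdx hc)).fun_mul (hasDerivAt_pdx hθ))).congr_deriv
      (by ring)
  have ht : pdt (fun s y => ρ s y * Etot kp km c θ u s y) t x = _ :=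
    ((hasDerivAt_pdt hρ).fun_mul hEt).deriv
  have hx : pdx (fun s y => ρ s y * Etot kp km c θ u s y * u s y) t x = _ :=
    (((hasDerivAt_pdx hρ).fun_mul hEx).fun_mul (hasDerivAt_pdx hu)).deriv
  have hSu : pdx (fun s y => S s y * u s y) t x = _ :=
    ((hasDerivAt_pdx hS).fun_mul (hasDerivAt_pdx hu)).deriv
  linear_combination heng - ht - hx + hSu
    - Etot kp km c θ u t x * mass_eq_nonconservative hρ hu hmass
    - u t x * momentum_eq_nonconservative hρ hu hmass hmom
    - ρ t x * (kp - km) * θ t x * htrans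

theorem stress_evolution_eq (hc : ContDiff ℝ 1 (uncurry c)) (hρ : ContDiff ℝ 1 (uncurry ρ))
    (hθ : ContDiff ℝ 1 (uncurry θ)) (hu : ContDiff ℝ 1 (uncurry u))
    (hσ : ContDiff ℝ 1 (uncurry (sigm μp μm γp γm c ρ θ u)))
    (hsol : MesoEqns μp μm γp γm kp km T c ρ θ u) (ht : t ∈ Icc (0 : ℝ) T)
    (hρ0 : ∀ y, ρ t y ≠ 0) (hμ0 : affc μp μm (c t x) ≠ 0) (hκ0 : affc kp km (c t x) ≠ 0) :
    pdt (sigm μp μm γp γm c ρ θ u) t x + u t x * pdx (sigm μp μm γp γm c ρ θ u) t x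
      = affc μp μm (c t x) * pdx (fun s y => pdx (sigm μp μm γp γm c ρ θ u) s y / ρ s y) t x
        - ((affc γp γm (c t x) - 1) / affc kp km (c t x) + 1)
          * sigm μp μm γp γm c ρ θ u t x * pdx u t x := by
  obtain ⟨-, -, -, -, htrans, hmass, hmom, heng⟩ := hsol
  set σ := sigm μp μm γp γm c ρ θ u with hσ_def
  have dc := hc.differentiable one_ne_zero
  have dρ := hρ.differentiable one_ne_zero
  have dθ := hθ.differentiable one_ne_zero
  have du := hu.differentiable one_ne_zero
  set U : Set (ℝ × ℝ) := {p | affc μp μm (c p.1 p.2) ≠ 0}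
  set V : ℝ → ℝ → ℝ := fun s y =>
    (σ s y + (affc γp γm (c s y) - 1) * ρ s y * θ s y) / affc μp μm (c s y)
  have hU : IsOpen U := isOpen_ne_fun (contDiff_affc μp μm hc).continuous continuous_const
  have hV : ContDiffOn ℝ 1 (uncurry V) U :=
    ((hσ.add (((contDiff_affc γp γm hc).sub contDiff_const).mul hρ |>.mul hθ)).contDiffOn.div
      (contDiff_affc μp μm hc).contDiffOn fun p hp => hp)
  have huV : EqOn (uncurry (pdx u)) (uncurry V) U := fun p hp => by
    simp only [uncurry, V, hσ_def, sigm]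
    field_simp [show affc μp μm (c p.1 p.2) ≠ 0 from hp]
    ring
  have hp : (t, x) ∈ U := hμ0
  have hvt : HasDerivAt (fun s => pdx u s x) (pdt V t x) t :=
    hasDerivAt_pdt_of_eqOn hU (hV.differentiableOn one_ne_zero) huV hp
  have hvx : HasDerivAt (fun y => pdx u t y) (pdx V t x) x :=
    hasDerivAt_pdx_of_eqOn hU (hV.differentiableOn one_ne_zero) huV hp
  have hutx : HasDerivAt (pdt u t) (pdt V t x) x :=
    hasDerivAt_pdt_of_pdx_eqOn hU du.differentiableOn hV huV hp
  have hmom' : (fun y => pdx σ t y / ρ t y) = fun y => pdt u t y + u t y * pdx u t y := by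
    funext y
    rw [← momentum_eq_nonconservative (dρ _) (du _) (hmass t ht y) (hmom t ht y)]
    field_simp [hρ0 y]
  have hJ : pdx (fun s y => pdx σ s y / ρ s y) t x
      = pdt V t x + pdx u t x * pdx u t x + u t x * pdx V t x := by
    change deriv (fun y => pdx σ t y / ρ t y) x = _
    rw [hmom', (hutx.fun_add ((hasDerivAt_pdx (du _)).fun_mul hvx)).deriv]
    ring
  have hσt : pdt σ t x = _ :=
    (hasDerivAt_stress μp μm γp γm (hasDerivAt_pdt (dc _)) (hasDerivAt_pdt (dρ _))
      (hasDerivAt_pdt (dθ _)) hvt).deriv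
  have hσx : pdx σ t x = _ :=
    (hasDerivAt_stress μp μm γp γm (hasDerivAt_pdx (dc _)) (hasDerivAt_pdx (dρ _))
      (hasDerivAt_pdx (dθ _)) hvx).deriv
  have htemp : ρ t x * (pdt θ t x + u t x * pdx θ t x)
      = σ t x * pdx u t x / affc kp km (c t x) := by
    rw [eq_div_iff hκ0, ← temperature_eq_of_energy (dc _) (dρ _) (dθ _) (du _)
      (hσ.differentiable one_ne_zero _) (htrans t ht x) (hmass t ht x) (hmom t ht x)
      (heng t ht x)]
    ring
  have hσtx : σ t x
      = affc μp μm (c t x) * pdx u t x - (affc γp γm (c t x) - 1) * ρ t x * θ t x := rfl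
  rw [hJ, hσt, hσx]
  linear_combination ((μp - μm) * pdx u t x - (γp - γm) * ρ t x * θ t x) * htrans t ht x
    - (affc γp γm (c t x) - 1) * θ t x * mass_eq_nonconservative (dρ _) (du _) (hmass t ht x)
    - (affc γp γm (c t x) - 1) * htemp + pdx u t x * hσtx

theorem renormalized_eq_of_stress_evolution {σ m u : ℝ → ℝ → ℝ} {β : ℝ → ℝ} {t x J K : ℝ}
    (hσ : DifferentiableAt ℝ (uncurry σ) (t, x)) (hm : DifferentiableAt ℝ (uncurry m) (t, x))
    (hu : DifferentiableAt ℝ (uncurry u) (t, x)) (hβ : DifferentiableAt ℝ β (σ t x))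
    (hm0 : m t x ≠ 0) (hmD : pdt m t x + u t x * pdx m t x = 0)
    (hσD : pdt σ t x + u t x * pdx σ t x = m t x * J - (K + 1) * σ t x * pdx u t x) :
    pdt (fun s y => β (σ s y) / m s y) t x + pdx (fun s y => u s y * β (σ s y) / m s y) t x
        - J * deriv β (σ t x)
      = -(pdx u t x / m t x) * (σ t x * deriv β (σ t x) - β (σ t x))
        - (K / m t x) * (σ t x * pdx u t x) * deriv β (σ t x) := by
  have hβt : HasDerivAt (fun s => β (σ s x)) (deriv β (σ t x) * pdt σ t x) t :=
    hβ.hasDerivAt.comp t (hasDerivAt_pdt hσ)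
  have hβx : HasDerivAt (fun y => β (σ t y)) (deriv β (σ t x) * pdx σ t x) x :=
    hβ.hasDerivAt.comp x (hasDerivAt_pdx hσ)
  have ht : pdt (fun s y => β (σ s y) / m s y) t x = _ :=
    (hβt.div (hasDerivAt_pdt hm) hm0).deriv
  have hx : pdx (fun s y => u s y * β (σ s y) / m s y) t x = _ :=
    (((hasDerivAt_pdx hu).fun_mul hβx).div (hasDerivAt_pdx hm) hm0).deriv
  rw [ht, hx]
  field_simp
  linear_combination deriv β (σ t x) * m t x * hσD - β (σ t x) * hmD

end TwoPhaseModel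

theorem stmt9_general (μp μm γp γm kp km T : ℝ)
    (hconst : GoodConsts μp μm γp γm kp km)
    (c ρ θ u : ℝ → ℝ → ℝ)
    (hc : ContDiff ℝ 1 (uncurry c)) (hρ : ContDiff ℝ 1 (uncurry ρ))
    (hθ : ContDiff ℝ 1 (uncurry θ)) (hu : ContDiff ℝ 1 (uncurry u))
    (hσ : ContDiff ℝ 1 (uncurry (sigm μp μm γp γm c ρ θ u)))
    (hrange : ∀ t ∈ Icc (0:ℝ) T, ∀ x : ℝ,
      0 < ρ t x ∧ 0 < θ t x ∧ c t x ∈ Icc (0:ℝ) 1)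
    (hsol : MesoEqns μp μm γp γm kp km T c ρ θ u)
    (β : ℝ → ℝ) (hβ : ContDiff ℝ 1 β) :
    ∀ t ∈ Icc (0:ℝ) T, ∀ x : ℝ,
      pdt (fun s y => β (sigm μp μm γp γm c ρ θ u s y) / affc μp μm (c s y)) t x
        + pdx (fun s y =>
            u s y * β (sigm μp μm γp γm c ρ θ u s y) / affc μp μm (c s y)) t x
        - pdx (fun s y => pdx (sigm μp μm γp γm c ρ θ u) s y / ρ s y) t x
            * deriv β (sigm μp μm γp γm c ρ θ u t x)
      = -(pdx u t x / affc μp μm (c t x))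
            * (sigm μp μm γp γm c ρ θ u t x * deriv β (sigm μp μm γp γm c ρ θ u t x)
                - β (sigm μp μm γp γm c ρ θ u t x))
        - ((affc γp γm (c t x) - 1) / (affc kp km (c t x) * affc μp μm (c t x)))
            * (sigm μp μm γp γm c ρ θ u t x * pdx u t x)
            * deriv β (sigm μp μm γp γm c ρ θ u t x) := by
  intro t ht x
  obtain ⟨hμp, hμm, -, -, hkp, hkm⟩ := hconst
  have hc01 := (hrange t ht x).2.2
  have hμ0 := (affc_pos hμp hμm hc01).ne'
  have hstress := stress_evolution_eq hc hρ hθ hu hσ hsol ht (fun y => (hrange t ht y).1.ne')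
    hμ0 (affc_pos hkp hkm hc01).ne'
  rw [← div_div]
  exact renormalized_eq_of_stress_evolution (hσ.differentiable one_ne_zero _)
    ((contDiff_affc μp μm hc).differentiable one_ne_zero _) (hu.differentiable one_ne_zero _)
    (hβ.differentiable one_ne_zero _) hμ0
    (transport_affc μp μm (hc.differentiable one_ne_zero _) (hsol.2.2.2.2.1 t ht x)) hstress

/-- Renormalized equation for the Cauchy stress: for any `C¹`
function `β`, a classical solution of the mesoscopic two-phase system satisfies
`∂ₜ(β(σ)/μ(c)) + ∂ₓ(uβ(σ)/μ(c)) − ∂ₓ(∂ₓσ/ρ)β'(σ)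
  = −(∂ₓu/μ(c))(σβ'(σ) − β(σ)) − ((γ(c)−1)/(c_v(c)μ(c)))σ∂ₓu β'(σ)`. -/
theorem stmt9 (μp μm γp γm kp km T : ℝ) (hT : 0 < T)
    (hconst : GoodConsts μp μm γp γm kp km)
    (c ρ θ u : ℝ → ℝ → ℝ)
    (hc : ContDiff ℝ 1 (uncurry c)) (hρ : ContDiff ℝ 1 (uncurry ρ))
    (hθ : ContDiff ℝ 1 (uncurry θ)) (hu : ContDiff ℝ 1 (uncurry u))
    (hu2 : ∀ t : ℝ, ContDiff ℝ 2 (u t))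
    (hσ : ContDiff ℝ 1 (uncurry (sigm μp μm γp γm c ρ θ u)))
    (hrange : ∀ t ∈ Icc (0:ℝ) T, ∀ x : ℝ,
      0 < ρ t x ∧ 0 < θ t x ∧ c t x ∈ Icc (0:ℝ) 1)
    (hsol : MesoEqns μp μm γp γm kp km T c ρ θ u)
    (β : ℝ → ℝ) (hβ : ContDiff ℝ 1 β) :
    ∀ t ∈ Icc (0:ℝ) T, ∀ x : ℝ,
      pdt (fun s y => β (sigm μp μm γp γm c ρ θ u s y) / affc μp μm (c s y)) t x
        + pdx (fun s y =>
            u s y * β (sigm μp μm γp γm c ρ θ u s y) / affc μp μm (c s y)) t x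
        - pdx (fun s y => pdx (sigm μp μm γp γm c ρ θ u) s y / ρ s y) t x
            * deriv β (sigm μp μm γp γm c ρ θ u t x)
      = -(pdx u t x / affc μp μm (c t x))
            * (sigm μp μm γp γm c ρ θ u t x * deriv β (sigm μp μm γp γm c ρ θ u t x)
                - β (sigm μp μm γp γm c ρ θ u t x))
        - ((affc γp γm (c t x) - 1) / (affc kp km (c t x) * affc μp μm (c t x)))
            * (sigm μp μm γp γm c ρ θ u t x * pdx u t x)
            * deriv β (sigm μp μm γp γm c ρ θ u t x) :=
  stmt9_general μp μm γp γm kp km T hconst c ρ θ u hc hρ hθ hu hσ hrange hsol β hβ
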